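/- arXiv:1305.2444 — 7 statements merged into one kernel-verified Lean document; each statement's English description precedes it below -/
import Mathlib

section
/- Let x(t) = a₀ + t·a₁ + t²·a₂ and y(t) = b₀ + t·b₁ + t²·b₂ be real quadratic polynomials in t. Then the parametrized curve C = {(x(t), y(t)) : t ∈ ℝ} ⊆ ℝ² is homogenization-convex, i.e., the closure of {τ·p : τ ≥ 0, p ∈ C} is convex. -/
/-!
Up to closure, the homogenization of the curve is the image of `ℂ` under the pair of binary
quadratic forms `A(u, v) = a₀u² + a₁uv + a₂v²`, `B(u, v) = b₀u² + b₁uv + b₂v²` evaluated at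
`w = u + iv`: indeed `τ • (x(t), y(t)) = (A, B)(√τ, √τ t)`. Every binary quadratic form is a linear
function of `(w², |w|²)`, and `w ↦ (w², |w|²)` maps `ℂ` onto the surface `|z| = r` of the convex
cone `|z| ≤ r` in `ℂ × ℝ`. A linear map `ℂ × ℝ → ℝ²` has a nonzero kernel vector, and moving a
point of the solid cone along it until it reaches the surface does not change its image. So the
image of `(A, B)` is the linear image of the solid cone, which is convex (Dines' theorem).
-/

/-- The homogeneous hull of a set: `{τ • x : τ ≥ 0, x ∈ C}`. -/
def homHull (C : Set (ℝ × ℝ)) : Set (ℝ × ℝ) :=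
  {y | ∃ τ : ℝ, 0 ≤ τ ∧ ∃ x ∈ C, y = τ • x}

open Set

def lorentzCone (V : Type*) [NormedAddCommGroup V] : Set (V × ℝ) := {p | ‖p.1‖ ≤ p.2}

def lorentzConeSurface (V : Type*) [NormedAddCommGroup V] : Set (V × ℝ) := {p | ‖p.1‖ = p.2}

theorem lorentzConeSurface_subset {V : Type*} [NormedAddCommGroup V] :
    lorentzConeSurface V ⊆ lorentzCone V :=
  fun _ hp ↦ le_of_eq hp

section LorentzCone

variable {V : Type*} [NormedAddCommGroup V] [NormedSpace ℝ V]

theorem convex_lorentzCone : Convex ℝ (lorentzCone V) := by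
  simpa [lorentzCone] using (convexOn_norm (convex_univ : Convex ℝ (univ : Set V))).convex_epigraph

theorem exists_add_smul_mem_lorentzConeSurface {x : V} {r : ℝ} (hxr : (x, r) ∈ lorentzCone V)
    {y : V} {s : ℝ} (hk : (y, s) ≠ 0) (hs : s ≤ 0) :
    ∃ t : ℝ, (x, r) + t • (y, s) ∈ lorentzConeSurface V := by
  change ‖x‖ ≤ r at hxr
  set f : ℝ → ℝ := fun t ↦ r + t * s - ‖x + t • y‖
  have hc : 0 < ‖y‖ - s := by
    rcases eq_or_ne y 0 with rfl | hy
    · have : s ≠ 0 := fun h ↦ hk (by simp [h])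
      simpa using lt_of_le_of_ne hs this
    · linarith [norm_pos_iff.2 hy]
  -- past `T`, the height `r + t * s` falls below the lower bound `t * ‖y‖ - ‖x‖` of `‖x + t • y‖`
  set T := (r + ‖x‖) / (‖y‖ - s)
  have hT : 0 ≤ T := div_nonneg (by linarith [norm_nonneg x]) hc.le
  have hfT : f T ≤ 0 := by
    have h₁ : ‖T • y‖ ≤ ‖x + T • y‖ + ‖x‖ := by
      simpa using norm_sub_le (x + T • y) x
    have h₂ : T * (‖y‖ - s) = r + ‖x‖ := div_mul_cancel₀ _ hc.ne'
    rw [norm_smul, Real.norm_of_nonneg hT] at h₁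
    simp only [f]
    nlinarith
  have hf0 : 0 ≤ f 0 := by simpa [f] using hxr
  have hf : Continuous f := by fun_prop
  obtain ⟨t, -, ht⟩ := intermediate_value_Icc' hT hf.continuousOn ⟨hfT, hf0⟩
  refine ⟨t, ?_⟩
  simp only [f] at ht
  change ‖x + t • y‖ = r + t * s
  linarith

theorem LinearMap.image_lorentzConeSurface {E : Type*} [AddCommGroup E] [Module ℝ E]
    (L : V × ℝ →ₗ[ℝ] E) (hL : LinearMap.ker L ≠ ⊥) :
    L '' lorentzConeSurface V = L '' lorentzCone V := by
  refine (image_mono lorentzConeSurface_subset).antisymm ?_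
  rintro _ ⟨⟨x, r⟩, hp, rfl⟩
  obtain ⟨k, hkL, hk, hk₂⟩ : ∃ k ∈ LinearMap.ker L, k ≠ 0 ∧ k.2 ≤ 0 := by
    obtain ⟨k, hkL, hk⟩ := Submodule.exists_mem_ne_zero_of_ne_bot hL
    rcases le_total k.2 0 with h | h
    · exact ⟨k, hkL, hk, h⟩
    · exact ⟨-k, neg_mem hkL, neg_ne_zero.2 hk, by simpa using h⟩
  obtain ⟨t, ht⟩ := exists_add_smul_mem_lorentzConeSurface hp hk hk₂
  exact ⟨_, ht, by simp [LinearMap.mem_ker.1 hkL]⟩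

theorem convex_image_lorentzConeSurface {E : Type*} [AddCommGroup E] [Module ℝ E]
    (L : V × ℝ →ₗ[ℝ] E) (hL : LinearMap.ker L ≠ ⊥) : Convex ℝ (L '' lorentzConeSurface V) := by
  rw [L.image_lorentzConeSurface hL]
  exact convex_lorentzCone.linear_image L

end LorentzCone

theorem range_sq_normSq_eq_lorentzConeSurface :
    range (fun w : ℂ ↦ (w ^ 2, ‖w‖ ^ 2)) = lorentzConeSurface ℂ := by
  refine (range_subset_iff.2 fun w ↦ (norm_pow w 2 : _)).antisymm ?_
  rintro ⟨z, r⟩ (hz : ‖z‖ = r)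
  obtain ⟨w, rfl⟩ := IsAlgClosed.exists_pow_nat_eq z two_pos
  exact ⟨w, by rw [← hz, norm_pow]⟩

def binaryQuadForm (a₀ a₁ a₂ : ℝ) (w : ℂ) : ℝ :=
  a₀ * w.re ^ 2 + a₁ * (w.re * w.im) + a₂ * w.im ^ 2

noncomputable def quadFormFunctional (a₀ a₁ a₂ : ℝ) : ℂ × ℝ →ₗ[ℝ] ℝ where
  toFun p := (a₀ - a₂) / 2 * p.1.re + a₁ / 2 * p.1.im + (a₀ + a₂) / 2 * p.2
  map_add' p q := by
    simp only [Prod.fst_add, Prod.snd_add, Complex.add_re, Complex.add_im]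
    ring
  map_smul' c p := by
    simp only [Prod.smul_fst, Prod.smul_snd, Complex.real_smul, Complex.re_ofReal_mul,
      Complex.im_ofReal_mul, smul_eq_mul, RingHom.id_apply]
    ring

theorem quadFormFunctional_sq_normSq (a₀ a₁ a₂ : ℝ) (w : ℂ) :
    quadFormFunctional a₀ a₁ a₂ (w ^ 2, ‖w‖ ^ 2) = binaryQuadForm a₀ a₁ a₂ w := by
  rw [Complex.sq_norm, Complex.normSq_apply]
  simp only [quadFormFunctional, binaryQuadForm, LinearMap.coe_mk, AddHom.coe_mk, sq,
    Complex.mul_re, Complex.mul_im]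
  ring

theorem convex_range_binaryQuadForm_pair (a₀ a₁ a₂ b₀ b₁ b₂ : ℝ) :
    Convex ℝ (range fun w ↦ (binaryQuadForm a₀ a₁ a₂ w, binaryQuadForm b₀ b₁ b₂ w)) := by
  set L := (quadFormFunctional a₀ a₁ a₂).prod (quadFormFunctional b₀ b₁ b₂)
  have hL : LinearMap.ker L ≠ ⊥ := LinearMap.ker_ne_bot_of_finrank_lt <| by
    simp [Module.finrank_prod, Complex.finrank_real_complex]
  have hrange : (range fun w ↦ (binaryQuadForm a₀ a₁ a₂ w, binaryQuadForm b₀ b₁ b₂ w)) =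
      L '' lorentzConeSurface ℂ := by
    rw [← range_sq_normSq_eq_lorentzConeSurface, ← range_comp]
    simp [L, Function.comp_def, quadFormFunctional_sq_normSq]
  rw [hrange]
  exact convex_image_lorentzConeSurface L hL

/-- A curve in `ℝ²` parametrized by two quadratic polynomials is
homogenization-convex. -/
theorem quadratic_curve_homogenizationConvex (a₀ a₁ a₂ b₀ b₁ b₂ : ℝ) :
    Convex ℝ (closure (homHull
      {p : ℝ × ℝ | ∃ t : ℝ, p = (a₀ + t * a₁ + t ^ 2 * a₂, b₀ + t * b₁ + t ^ 2 * b₂)})) := by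
  set C := {p : ℝ × ℝ | ∃ t : ℝ, p = (a₀ + t * a₁ + t ^ 2 * a₂, b₀ + t * b₁ + t ^ 2 * b₂)}
  set q : ℂ → ℝ × ℝ := fun w ↦ (binaryQuadForm a₀ a₁ a₂ w, binaryQuadForm b₀ b₁ b₂ w)
  have hsub : homHull C ⊆ range q := by
    rintro _ ⟨τ, hτ, _, ⟨t, rfl⟩, rfl⟩
    have h := Real.sq_sqrt hτ
    refine ⟨⟨√τ, √τ * t⟩, ?_⟩
    simp only [q, binaryQuadForm, Prod.smul_mk, smul_eq_mul, Prod.mk.injEq]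
    constructor
    · linear_combination (a₀ + t * a₁ + t ^ 2 * a₂) * h
    · linear_combination (b₀ + t * b₁ + t ^ 2 * b₂) * h
  have hdense : range q ⊆ closure (homHull C) := by
    have hq : Continuous q := by simp only [q, binaryQuadForm]; fun_prop
    refine (hq.range_subset_closure_image_dense
      ((dense_compl_singleton 0).preimage Complex.isOpenMap_re)).trans (closure_mono ?_)
    rintro _ ⟨w, hw : w.re ≠ 0, rfl⟩
    refine ⟨w.re ^ 2, sq_nonneg _, _, ⟨w.im / w.re, rfl⟩, ?_⟩
    simp only [q, binaryQuadForm, Prod.smul_mk, smul_eq_mul, Prod.mk.injEq]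
    constructor <;> field_simp
  rw [(closure_mono hsub).antisymm (closure_minimal hdense isClosed_closure)]
  exact (convex_range_binaryQuadForm_pair a₀ a₁ a₂ b₀ b₁ b₂).closure
end

section
/- Let K ⊆ ℝ² be a closed convex set whose complement contains 0 in its interior (i.e., 0 lies in the interior of ℝ² \ K). Then the boundary C = ∂K is homogenization-convex: the closure of {τx : τ ≥ 0, x ∈ ∂K} is convex. -/
open Set

theorem homHull_mono {C D : Set (ℝ × ℝ)} (h : C ⊆ D) : homHull C ⊆ homHull D := by
  rintro _ ⟨τ, hτ, x, hx, rfl⟩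
  exact ⟨τ, hτ, x, h hx, rfl⟩

theorem convex_homHull {C : Set (ℝ × ℝ)} (hC : Convex ℝ C) : Convex ℝ (homHull C) := by
  rintro _ ⟨τ₁, hτ₁, x₁, hx₁, rfl⟩ _ ⟨τ₂, hτ₂, x₂, hx₂, rfl⟩ a b ha hb -
  obtain ⟨z, hz, hcombo⟩ :=
    hC.exists_mem_add_smul_eq hx₁ hx₂ (mul_nonneg ha hτ₁) (mul_nonneg hb hτ₂)
  exact ⟨_, add_nonneg (mul_nonneg ha hτ₁) (mul_nonneg hb hτ₂), z, hz, by
    rw [hcombo, smul_smul, smul_smul]⟩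

theorem exists_pos_smul_mem_frontier {E : Type*} [TopologicalSpace E] [AddCommGroup E]
    [Module ℝ E] [ContinuousSMul ℝ E] {K : Set E} (h0 : (0 : E) ∉ closure K) {x : E}
    (hx : x ∈ K) : ∃ t ∈ Ioc (0 : ℝ) 1, t • x ∈ frontier K := by
  let ray : Icc (0 : ℝ) 1 → E := fun t => (t : ℝ) • x
  have hray : Continuous ray := continuous_subtype_val.smul continuous_const
  have hne : (ray ⁻¹' K).Nonempty :=
    ⟨⟨1, right_mem_Icc.2 zero_le_one⟩, by simpa [ray] using hx⟩
  have hne_univ : ray ⁻¹' K ≠ univ := fun h => h0 <| subset_closure <| by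
    simpa [ray] using eq_univ_iff_forall.1 h ⟨0, left_mem_Icc.2 zero_le_one⟩
  obtain ⟨t, ht⟩ := nonempty_frontier_iff.2 ⟨hne, hne_univ⟩
  have htK : ray t ∈ frontier K := hray.frontier_preimage_subset K ht
  refine ⟨t, ⟨lt_of_le_of_ne t.2.1 ?_, t.2.2⟩, htK⟩
  rintro h
  exact h0 (frontier_subset_closure (by simpa [ray, ← h] using htK))

theorem homHull_frontier_eq {K : Set (ℝ × ℝ)} (hK : IsClosed K) (h0 : (0 : ℝ × ℝ) ∉ K) :
    homHull (frontier K) = homHull K := by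
  refine (homHull_mono hK.frontier_subset).antisymm ?_
  rintro _ ⟨τ, hτ, x, hx, rfl⟩
  obtain ⟨t, ⟨ht, -⟩, htx⟩ := exists_pos_smul_mem_frontier (by rwa [hK.closure_eq]) hx
  exact ⟨τ / t, div_nonneg hτ ht.le, t • x, htx, by
    rw [smul_smul, div_mul_cancel₀ _ ht.ne']⟩

/-- If `K ⊆ ℝ²` is closed and convex and `0` lies in the interior of its complement,
then the boundary `∂K` is homogenization-convex. -/
theorem frontier_homogenizationConvex_of_zero_mem_interior_compl
    (K : Set (ℝ × ℝ)) (hKcl : IsClosed K) (hKcv : Convex ℝ K)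
    (h0 : (0 : ℝ × ℝ) ∈ interior Kᶜ) :
    Convex ℝ (closure (homHull (frontier K))) := by
  rw [homHull_frontier_eq hKcl (interior_subset h0)]
  exact (convex_homHull hKcv).closure
end

section
/- Let V be a real Hilbert space, ψ, φ : V → ℝ continuous linear forms, W = (ker φ ∩ ker ψ)^⊥, and π_W the orthogonal projection onto W. Let C ⊆ V be a set such that φ(x₀) > 0 for some x₀ ∈ C and such that π_W(C) is homogenization-convex in W (a space of dimension at most 2). Then: ψ(x) ≥ 0 for all x ∈ C with φ(x) ≥ 0, if and only if there exists ξ ≥ 0 with ψ(x) − ξφ(x) ≥ 0 for all x ∈ C. -/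
/-! The pair `(φ, ψ)` maps the closure of the cone over `π_W(C)` onto a convex subset `Q` of the
plane. Since `φ` and `ψ` factor through `π_W`, `Q` contains `(φ x, ψ x)` for every `x ∈ C`, and by
the hypothesis and a closure argument it misses the open quadrant `{a > 0, b < 0}`. Separating `Q`
from this open cone gives a functional `α a + β b ≥ 0` on `Q` with `α ≤ 0 ≤ β`; the point
`(φ x₀, ψ x₀)` forces `β > 0`, and `ξ = -α / β` is the multiplier. -/

open Set

theorem nonpos_and_nonneg_and_nonneg_of_lt_on_quadrant {α β u : ℝ}
    (h : ∀ s t : ℝ, 0 < s → 0 < t → α * s - β * t < u) : α ≤ 0 ∧ 0 ≤ β ∧ 0 ≤ u := by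
  have hα : α ≤ 0 := by
    by_contra! hα
    have := h ((|u| + |β| + 1) / α) 1 (by positivity) one_pos
    rw [mul_div_cancel₀ _ hα.ne'] at this
    linarith [le_abs_self u, le_abs_self β]
  have hβ : 0 ≤ β := by
    by_contra! hβ
    have := h 1 ((|u| + |α| + 1) / -β) one_pos (div_pos (by positivity) (neg_pos.2 hβ))
    rw [div_neg, mul_neg, mul_div_cancel₀ _ hβ.ne] at this
    linarith [le_abs_self u, neg_abs_le α]
  refine ⟨hα, hβ, ?_⟩
  by_contra! hu
  rcases (sub_nonpos.2 (hα.trans hβ)).eq_or_lt with hαβ | hαβ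
  · linarith [h 1 1 one_pos one_pos]
  · have hs := div_pos_of_neg_of_neg hu hαβ
    have := h _ _ hs hs
    rw [← sub_mul, mul_div_cancel₀ _ hαβ.ne] at this
    exact this.false

theorem exists_nonneg_mul_fst_le_snd {Q : Set (ℝ × ℝ)} (hQ : Convex ℝ Q) {p : ℝ × ℝ}
    (hp : p ∈ Q) (hp₁ : 0 < p.1) (hQ₄ : ∀ q ∈ Q, 0 < q.1 → 0 ≤ q.2) :
    ∃ ξ : ℝ, 0 ≤ ξ ∧ ∀ q ∈ Q, ξ * q.1 ≤ q.2 := by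
  have hdisj : Disjoint (Ioi 0 ×ˢ Iio 0) Q :=
    disjoint_left.2 fun q hqU hqQ => (hQ₄ q hqQ hqU.1).not_gt hqU.2
  obtain ⟨f, u, hfU, hfQ⟩ := geometric_hahn_banach_open ((convex_Ioi 0).prod (convex_Iio 0))
    (isOpen_Ioi.prod isOpen_Iio) hQ hdisj
  have hf : ∀ q : ℝ × ℝ, f q = f (1, 0) * q.1 + f (0, 1) * q.2 := fun q => by
    rw [show q = q.1 • (1, 0) + q.2 • (0, 1) by simp, map_add, map_smul, map_smul]
    simp [mul_comm]
  set α := f (1, 0)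
  set β := f (0, 1)
  obtain ⟨hα, hβ, hu⟩ := nonpos_and_nonneg_and_nonneg_of_lt_on_quadrant (α := α) (β := β) (u := u)
    fun s t hs ht => by simpa [hf, sub_eq_add_neg] using hfU (s, -t) ⟨hs, neg_neg_iff_pos.2 ht⟩
  have hfQ₀ : ∀ q ∈ Q, 0 ≤ α * q.1 + β * q.2 := fun q hq => hf q ▸ hu.trans (hfQ q hq)
  have hβ₀ : 0 < β := by
    refine hβ.lt_of_ne fun hβ₀ => ?_
    have h₁ := hfU (1, -1) (by norm_num)
    have h₂ := hfQ p hp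
    norm_num [hf, ← hβ₀] at h₁ h₂
    have hα₀ : α = 0 := le_antisymm hα (nonneg_of_mul_nonneg_left (hu.trans h₂) hp₁)
    rw [hα₀, zero_mul] at h₂
    linarith
  refine ⟨-α / β, div_nonneg (neg_nonneg.2 hα) hβ, fun q hq => ?_⟩
  rw [div_mul_eq_mul_div, div_le_iff₀ hβ₀]
  linarith [hfQ₀ q hq]

theorem exists_nonneg_mul_le_of_convex {E : Type*} [AddCommGroup E] [Module ℝ E] {K : Set E}
    (hK : Convex ℝ K) {φ ψ : E →ₗ[ℝ] ℝ} {x₀ : E} (hx₀ : x₀ ∈ K) (hφx₀ : 0 < φ x₀)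
    (h : ∀ x ∈ K, 0 < φ x → 0 ≤ ψ x) : ∃ ξ : ℝ, 0 ≤ ξ ∧ ∀ x ∈ K, ξ * φ x ≤ ψ x := by
  obtain ⟨ξ, hξ, hle⟩ := exists_nonneg_mul_fst_le_snd (hK.linear_image (φ.prod ψ))
    (mem_image_of_mem _ hx₀) hφx₀ (forall_mem_image.2 h)
  exact ⟨ξ, hξ, fun x hx => hle _ (mem_image_of_mem _ hx)⟩

section Cone

variable {V : Type*} [NormedAddCommGroup V] [InnerProductSpace ℝ V]

/-- The cone `{τ • π_W x | τ ≥ 0, x ∈ C}` for `W = Mᗮ`, with `π_W x` described by `x - π_W x ∈ M`. -/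
def orthogonalProjCone (M : Submodule ℝ V) (C : Set V) : Set V :=
  {y | ∃ τ : ℝ, 0 ≤ τ ∧ ∃ w, (w ∈ Mᗮ ∧ ∃ x ∈ C, x - w ∈ M) ∧ y = τ • w}

theorem exists_mem_orthogonalProjCone_sub_mem (M : Submodule ℝ V) [M.HasOrthogonalProjection]
    {C : Set V} {x : V} (hx : x ∈ C) : ∃ w ∈ orthogonalProjCone M C, x - w ∈ M :=
  ⟨x - M.starProjection x, ⟨1, zero_le_one, _,
    ⟨M.sub_starProjection_mem_orthogonal x, x, hx, by simp⟩, (one_smul ℝ _).symm⟩, by simp⟩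

theorem nonneg_of_mem_closure_orthogonalProjCone {M : Submodule ℝ V} {C : Set V}
    {φ ψ : V →L[ℝ] ℝ} (hφ : M ≤ LinearMap.ker (φ : V →ₗ[ℝ] ℝ))
    (hψ : M ≤ LinearMap.ker (ψ : V →ₗ[ℝ] ℝ)) (h : ∀ x ∈ C, 0 ≤ φ x → 0 ≤ ψ x) {y : V}
    (hy : y ∈ closure (orthogonalProjCone M C)) (hφy : 0 < φ y) : 0 ≤ ψ y := by
  have hclosed : IsClosed {v | φ v ≤ 0 ∨ 0 ≤ ψ v} :=
    (isClosed_le φ.continuous continuous_const).union (isClosed_le continuous_const ψ.continuous)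
  have hcone : orthogonalProjCone M C ⊆ {v | φ v ≤ 0 ∨ 0 ≤ ψ v} := by
    rintro _ ⟨τ, hτ, w, ⟨-, x, hx, hxw⟩, rfl⟩
    have hφw : φ x = φ w := LinearMap.sub_mem_ker_iff.1 (hφ hxw)
    have hψw : ψ x = ψ w := LinearMap.sub_mem_ker_iff.1 (hψ hxw)
    rw [mem_ofPred_eq, map_smul, map_smul, ← hφw, ← hψw, smul_eq_mul, smul_eq_mul]
    rcases le_or_gt 0 (φ x) with h0 | h0
    · exact Or.inr (mul_nonneg hτ (h x hx h0))
    · exact Or.inl (mul_nonpos_of_nonneg_of_nonpos hτ h0.le)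
  exact (closure_minimal hcone hclosed hy).resolve_left hφy.not_ge

end Cone

/-- Generalized 2D S-Lemma in a real Hilbert space `V`: for continuous linear forms
`ψ, φ` and `W = (ker φ ∩ ker ψ)ᗮ`, if some `x₀ ∈ C` has `φ x₀ > 0` and the image of
`C` under the orthogonal projection `π_W` (described here by the orthogonal
decomposition `x = w + m` with `w ∈ W`, `m ∈ ker φ ⊓ ker ψ`) is
homogenization-convex, then `ψ ≥ 0` on `{x ∈ C : φ x ≥ 0}` iff `ψ - ξφ ≥ 0` on `C`
for some `ξ ≥ 0`. -/
theorem generalized_S_lemma {V : Type*} [NormedAddCommGroup V]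
    [InnerProductSpace ℝ V] [CompleteSpace V]
    (ψ φ : V →L[ℝ] ℝ) (C : Set V)
    (x₀ : V) (hx₀ : x₀ ∈ C) (hφx₀ : 0 < φ x₀)
    (hproj : Convex ℝ (closure {y : V | ∃ τ : ℝ, 0 ≤ τ ∧ ∃ w,
      (w ∈ (LinearMap.ker (φ : V →ₗ[ℝ] ℝ) ⊓ LinearMap.ker (ψ : V →ₗ[ℝ] ℝ) : Submodule ℝ V)ᗮ ∧
        ∃ x ∈ C, x - w ∈ (LinearMap.ker (φ : V →ₗ[ℝ] ℝ) ⊓ LinearMap.ker (ψ : V →ₗ[ℝ] ℝ) : Submodule ℝ V)) ∧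
      y = τ • w})) :
    (∀ x ∈ C, 0 ≤ φ x → 0 ≤ ψ x) ↔
      ∃ ξ : ℝ, 0 ≤ ξ ∧ ∀ x ∈ C, 0 ≤ ψ x - ξ * φ x := by
  refine ⟨fun h => ?_, fun ⟨ξ, _, hle⟩ x hx hφx => by nlinarith [hle x hx]⟩
  set M := LinearMap.ker (φ : V →ₗ[ℝ] ℝ) ⊓ LinearMap.ker (ψ : V →ₗ[ℝ] ℝ)
  have hM : IsClosed (M : Set V) := by simpa [M] using φ.isClosed_ker.inter ψ.isClosed_ker
  have : CompleteSpace M := hM.completeSpace_coe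
  have hval : ∀ {x w : V}, x - w ∈ M → φ x = φ w ∧ ψ x = ψ w := fun hxw =>
    ⟨LinearMap.sub_mem_ker_iff.1 hxw.1, LinearMap.sub_mem_ker_iff.1 hxw.2⟩
  obtain ⟨w₀, hw₀, hxw₀⟩ := exists_mem_orthogonalProjCone_sub_mem M hx₀
  obtain ⟨ξ, hξ, hle⟩ := exists_nonneg_mul_le_of_convex (φ := (φ : V →ₗ[ℝ] ℝ)) (ψ := ψ) hproj
    (subset_closure hw₀) ((hval hxw₀).1 ▸ hφx₀)
    (fun y hy => nonneg_of_mem_closure_orthogonalProjCone inf_le_left inf_le_right h hy)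
  refine ⟨ξ, hξ, fun x hx => ?_⟩
  obtain ⟨w, hw, hxw⟩ := exists_mem_orthogonalProjCone_sub_mem M hx
  have := hle w (subset_closure hw)
  simp only [ContinuousLinearMap.coe_coe, ← (hval hxw).1, ← (hval hxw).2] at this
  linarith
end

section
/- (S-Lemma) Let g, h : ℝⁿ → ℝ be quadratic functions (of the form x ↦ xᵀQx + 2ℓᵀx + c with Q symmetric) and suppose h(x₀) > 0 for some x₀ ∈ ℝⁿ. Then g(x) ≥ 0 for all x with h(x) ≥ 0 if and only if there exists ξ ≥ 0 such that g(x) − ξh(x) ≥ 0 for all x ∈ ℝⁿ. -/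
/-!
Homogenizing, `g` and `h` become quadratic forms `F`, `G` on `ℝⁿ × ℝ`, and the implication
`G ≥ 0 → F ≥ 0` passes from the chart `t = 1` to all of `ℝⁿ × ℝ`: by scaling where `t ≠ 0`, and
where `t = 0` because `G` stays positive along one half of the line through `(x₀, 1)` in that
direction, on which `F` would tend to `-∞`.

For forms, if `G z < 0 < G w` then `s ↦ G (s • z + w)` has a positive root and a negative root;
`F ≥ 0` at both of them, which forces `F z / G z ≤ F w / G w`. Hence
`ξ = inf {F w / G w | G w > 0}` satisfies `ξ G ≤ F` everywhere.
-/

open Matrix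

lemma exists_pos_quadratic_eq_zero {a b c : ℝ} (ha : a < 0) (hc : 0 < c) :
    ∃ s, 0 < s ∧ a * s ^ 2 + b * s + c = 0 := by
  set D := √(b ^ 2 - 4 * a * c)
  have hD : D ^ 2 = b ^ 2 - 4 * a * c := Real.sq_sqrt (by nlinarith)
  have hbD : -b < D := by
    nlinarith [Real.sqrt_nonneg (b ^ 2 - 4 * a * c), neg_abs_le b, sq_abs b, abs_nonneg b]
  refine ⟨(-b - D) / (2 * a), div_pos_of_neg_of_neg (by linarith) (by linarith), ?_⟩
  field_simp [ha.ne]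
  linear_combination hD

lemma exists_nonneg_quadratic_neg {a b c : ℝ} (ha : a < 0) :
    ∃ s, 0 ≤ s ∧ a * s ^ 2 + b * s + c < 0 := by
  set s := 1 + (|b| + |c| + 1) / -a
  have hs : 1 ≤ s := le_add_of_nonneg_right (div_nonneg (by positivity) (by linarith))
  have has : a * s = a - (|b| + |c| + 1) := by simp only [s]; field_simp [ha.ne]; ring
  refine ⟨s, by linarith, ?_⟩
  nlinarith [le_abs_self b, le_abs_self c, abs_nonneg b, abs_nonneg c]

lemma mul_le_mul_of_nonneg_at_roots {a p c b e d s t : ℝ} (hb : b ≤ 0) (hs : 0 < s) (ht : t < 0)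
    (hgs : b * s ^ 2 + e * s + d = 0) (hgt : b * t ^ 2 + e * t + d = 0)
    (hfs : 0 ≤ a * s ^ 2 + p * s + c) (hft : 0 ≤ a * t ^ 2 + p * t + c) :
    c * b ≤ a * d := by
  have hvieta : b * (s * t) = d := by
    have : (s - t) * (b * (s + t) + e) = 0 := by linear_combination hgs - hgt
    have hsum := (mul_eq_zero.mp this).resolve_left (by linarith)
    linear_combination s * hsum - hgs
  have hprod : a * (s * t) ≤ c := by
    have : 0 ≤ (s - t) * (c - a * (s * t)) := by nlinarith
    nlinarith
  calc c * b ≤ a * (s * t) * b := mul_le_mul_of_nonpos_right hprod hb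
    _ = a * d := by rw [← hvieta]; ring

open QuadraticMap

namespace QuadraticForm

variable {V : Type*} [AddCommGroup V] [Module ℝ V]

lemma map_smul_add (q : QuadraticForm ℝ V) (s : ℝ) (x y : V) :
    q (s • x + y) = q x * s ^ 2 + polar q x y * s + q y := by
  rw [QuadraticMap.map_add q, QuadraticMap.map_smul, polar_smul_left, smul_eq_mul, smul_eq_mul]
  ring

lemma exists_pos_map_smul_add_eq_zero {g : QuadraticForm ℝ V} {z w : V} (hz : g z < 0)
    (hw : 0 < g w) : ∃ s : ℝ, 0 < s ∧ g (s • z + w) = 0 := by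
  simpa only [map_smul_add] using exists_pos_quadratic_eq_zero (b := polar g z w) hz hw

variable {f g : QuadraticForm ℝ V}

lemma mul_le_mul_of_nonneg_imp (H : ∀ z, 0 ≤ g z → 0 ≤ f z) {z w : V} (hz : g z < 0)
    (hw : 0 < g w) : f w * g z ≤ f z * g w := by
  obtain ⟨s, hs, hgs⟩ := exists_pos_map_smul_add_eq_zero hz hw
  obtain ⟨s', hs', hgs'⟩ :=
    exists_pos_map_smul_add_eq_zero (z := -z) (by rwa [QuadraticMap.map_neg]) hw
  rw [smul_neg, ← neg_smul] at hgs'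
  have hfs := H _ hgs.ge
  have hfs' := H _ hgs'.ge
  rw [map_smul_add] at hgs hgs' hfs hfs'
  exact mul_le_mul_of_nonneg_at_roots hz.le hs (neg_neg_of_pos hs') hgs hgs' hfs hfs'

theorem exists_le_of_nonneg_imp (H : ∀ z, 0 ≤ g z → 0 ≤ f z) {z₀ : V} (h₀ : 0 < g z₀) :
    ∃ ξ, 0 ≤ ξ ∧ ∀ z, ξ * g z ≤ f z := by
  set S := {r | ∃ w, 0 < g w ∧ f w / g w = r}
  have hS : S.Nonempty := ⟨_, z₀, h₀, rfl⟩
  have hS₀ : ∀ r ∈ S, 0 ≤ r := by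
    rintro r ⟨w, hw, rfl⟩
    exact div_nonneg (H w hw.le) hw.le
  refine ⟨sInf S, Real.sInf_nonneg hS₀, fun z => ?_⟩
  rcases lt_trichotomy (g z) 0 with hz | hz | hz
  · have : f z / g z ≤ sInf S := le_csInf hS fun r ⟨w, hw, hr⟩ => by
      rw [← hr, div_le_iff_of_neg hz, div_mul_eq_mul_div, div_le_iff₀ hw]
      exact mul_le_mul_of_nonneg_imp H hz hw
    exact (div_le_iff_of_neg hz).1 this
  · simpa [hz] using H z hz.ge
  · exact (le_div_iff₀ hz).1 (csInf_le ⟨0, hS₀⟩ ⟨z, hz, rfl⟩)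

lemma nonneg_imp_of_nonneg_imp_at_one {F G : QuadraticForm ℝ (V × ℝ)}
    (H : ∀ x, 0 ≤ G (x, 1) → 0 ≤ F (x, 1)) {x₀ : V} (h₀ : 0 < G (x₀, 1)) (z : V × ℝ)
    (hz : 0 ≤ G z) : 0 ≤ F z := by
  obtain ⟨x, t⟩ := z
  rcases eq_or_ne t 0 with rfl | ht
  · set w : V × ℝ := (x₀, 1)
    have H' : ∀ s : ℝ, 0 ≤ G (s • (x, 0) + w) → 0 ≤ F (s • (x, 0) + w) := fun s => by
      simpa [w] using H (s • x + x₀)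
    by_contra! hF
    obtain ⟨T, hT, hneg⟩ := exists_nonneg_quadratic_neg (b := |polar F (x, 0) w|) (c := F w) hF
    obtain ⟨s, hsT, hsG⟩ : ∃ s, |s| = T ∧ 0 ≤ polar G (x, 0) w * s := by
      rcases le_total 0 (polar G (x, 0) w) with h | h
      · exact ⟨T, abs_of_nonneg hT, mul_nonneg h hT⟩
      · exact ⟨-T, by rw [abs_neg, abs_of_nonneg hT], by nlinarith⟩
    have hGs : 0 ≤ G (s • (x, 0) + w) := by
      rw [map_smul_add]; nlinarith [mul_nonneg hz (sq_nonneg s)]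
    have hFs := H' s hGs
    rw [map_smul_add, ← sq_abs s, hsT] at hFs
    have : polar F (x, 0) w * s ≤ |polar F (x, 0) w| * T := by
      rw [← hsT, ← abs_mul]; exact le_abs_self _
    linarith
  · have hxt : ((x, t) : V × ℝ) = t • (t⁻¹ • x, 1) := by simp [smul_smul, ht]
    rw [hxt, QuadraticMap.map_smul, smul_eq_mul] at hz ⊢
    exact mul_nonneg (mul_self_nonneg t)
      (H _ (nonneg_of_mul_nonneg_right hz (mul_self_pos.2 ht)))

theorem nonneg_imp_at_one_iff_exists_le {F G : QuadraticForm ℝ (V × ℝ)} {x₀ : V}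
    (h₀ : 0 < G (x₀, 1)) :
    (∀ x, 0 ≤ G (x, 1) → 0 ≤ F (x, 1)) ↔ ∃ ξ, 0 ≤ ξ ∧ ∀ x, ξ * G (x, 1) ≤ F (x, 1) := by
  refine ⟨fun H => ?_, fun ⟨ξ, hξ, hle⟩ x hx => (mul_nonneg hξ hx).trans (hle x)⟩
  obtain ⟨ξ, hξ, hle⟩ := exists_le_of_nonneg_imp (nonneg_imp_of_nonneg_imp_at_one H h₀) h₀
  exact ⟨ξ, hξ, fun x => hle (x, 1)⟩

def homogenize (q : QuadraticForm ℝ V) (ℓ : V →ₗ[ℝ] ℝ) (c : ℝ) : QuadraticForm ℝ (V × ℝ) :=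
  q.comp (LinearMap.fst ℝ V ℝ) + 2 • linMulLin (ℓ ∘ₗ LinearMap.fst ℝ V ℝ) (LinearMap.snd ℝ V ℝ)
    + c • sq.comp (LinearMap.snd ℝ V ℝ)

@[simp]
lemma homogenize_apply_one (q : QuadraticForm ℝ V) (ℓ : V →ₗ[ℝ] ℝ) (c : ℝ) (x : V) :
    homogenize q ℓ c (x, 1) = q x + 2 * ℓ x + c := by
  simp [homogenize]

end QuadraticForm

lemma Matrix.toQuadraticForm'_apply {n : Type*} [Fintype n] [DecidableEq n]
    (M : Matrix n n ℝ) (x : n → ℝ) : M.toQuadraticForm' x = x ⬝ᵥ M *ᵥ x := by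
  simp [toQuadraticForm', toLinearMap₂'_apply']

theorem s_lemma_general {n : ℕ} (Q A : Matrix (Fin n) (Fin n) ℝ)
    (ℓ b : Fin n → ℝ) (c d : ℝ)
    (x₀ : Fin n → ℝ) (hx₀ : 0 < x₀ ⬝ᵥ A.mulVec x₀ + 2 * (b ⬝ᵥ x₀) + d) :
    (∀ x : Fin n → ℝ, 0 ≤ x ⬝ᵥ A.mulVec x + 2 * (b ⬝ᵥ x) + d →
        0 ≤ x ⬝ᵥ Q.mulVec x + 2 * (ℓ ⬝ᵥ x) + c) ↔
      ∃ ξ : ℝ, 0 ≤ ξ ∧ ∀ x : Fin n → ℝ,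
        0 ≤ (x ⬝ᵥ Q.mulVec x + 2 * (ℓ ⬝ᵥ x) + c)
            - ξ * (x ⬝ᵥ A.mulVec x + 2 * (b ⬝ᵥ x) + d) := by
  have key := QuadraticForm.nonneg_imp_at_one_iff_exists_le
    (F := QuadraticForm.homogenize Q.toQuadraticForm' (dotProductBilin ℝ ℝ ℓ) c)
    (G := QuadraticForm.homogenize A.toQuadraticForm' (dotProductBilin ℝ ℝ b) d) (x₀ := x₀)
  simp only [QuadraticForm.homogenize_apply_one, Matrix.toQuadraticForm'_apply,
    dotProductBilin_apply_apply, sub_nonneg] at key ⊢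
  exact key hx₀

/-- Yakubovich's S-Lemma: for quadratic functions
`g x = xᵀQx + 2ℓᵀx + c` and `h x = xᵀAx + 2bᵀx + d` on `ℝⁿ` with `Q, A` symmetric,
if `h x₀ > 0` for some `x₀`, then `g` is copositive with `h` iff there exists
`ξ ≥ 0` with `g - ξh ≥ 0` everywhere. -/
theorem s_lemma {n : ℕ} (Q A : Matrix (Fin n) (Fin n) ℝ)
    (hQ : Q.IsSymm) (hA : A.IsSymm) (ℓ b : Fin n → ℝ) (c d : ℝ)
    (x₀ : Fin n → ℝ) (hx₀ : 0 < x₀ ⬝ᵥ A.mulVec x₀ + 2 * (b ⬝ᵥ x₀) + d) :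
    (∀ x : Fin n → ℝ, 0 ≤ x ⬝ᵥ A.mulVec x + 2 * (b ⬝ᵥ x) + d →
        0 ≤ x ⬝ᵥ Q.mulVec x + 2 * (ℓ ⬝ᵥ x) + c) ↔
      ∃ ξ : ℝ, 0 ≤ ξ ∧ ∀ x : Fin n → ℝ,
        0 ≤ (x ⬝ᵥ Q.mulVec x + 2 * (ℓ ⬝ᵥ x) + c)
            - ξ * (x ⬝ᵥ A.mulVec x + 2 * (b ⬝ᵥ x) + d) :=
  s_lemma_general Q A ℓ b c d x₀ hx₀
end

section
/- A quadratic function g(x) = xᵀQx + 2ℓᵀx + c on ℝⁿ (Q symmetric) satisfies g(x) ≥ 0 for all x ∈ ℝⁿ if and only if the (n+1)×(n+1) symmetric block matrix [[Q, ℓ],[ℓᵀ, c]] is positive semidefinite. -/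
/-!
Homogenize: with `z = (x, t)`, the block form is `zᵀ M z = xᵀQx + 2t ℓᵀx + c t²`, which at
`t = 1` is `g x` and for `t ≠ 0` equals `t² g (x / t)`. In the remaining case `t = 0` the form is
`xᵀQx`, the leading coefficient of the everywhere nonnegative quadratic `s ↦ g (s x)`.
-/

open Matrix

theorem nonneg_of_forall_quadratic_nonneg {K : Type*} [Field K] [LinearOrder K]
    [IsStrictOrderedRing K] {a b c : K} (h : ∀ x : K, 0 ≤ a * (x * x) + b * x + c) : 0 ≤ a := by
  have hd : b ^ 2 - 4 * a * c ≤ 0 := discrim_le_zero h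
  by_contra! ha
  nlinarith [h 1, h (-1), mul_pos_of_neg_of_neg ha ha, sq_nonneg b]

section Homogenization

variable {ι : Type*} [Fintype ι]

theorem dotProduct_mulVec_fromBlocks_replicate {R : Type*} [CommRing R] (Q : Matrix ι ι R)
    (ℓ x : ι → R) (c : R) (y : Fin 1 → R) :
    Sum.elim x y ⬝ᵥ fromBlocks Q (replicateCol (Fin 1) ℓ) (replicateRow (Fin 1) ℓ)
        (of fun _ _ => c) *ᵥ Sum.elim x y
      = x ⬝ᵥ Q *ᵥ x + 2 * (ℓ ⬝ᵥ x) * y 0 + c * y 0 ^ 2 := by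
  have hcol : x ⬝ᵥ replicateCol (Fin 1) ℓ *ᵥ y = (ℓ ⬝ᵥ x) * y 0 := by
    simp only [dotProduct, mulVec, replicateCol_apply, Fin.sum_univ_one, Finset.sum_mul]
    exact Finset.sum_congr rfl fun _ _ => by ring
  have hrow : y ⬝ᵥ replicateRow (Fin 1) ℓ *ᵥ x = (ℓ ⬝ᵥ x) * y 0 := by
    simp only [dotProduct, mulVec, replicateRow_apply, Fin.sum_univ_one]
    ring
  have hcorner : y ⬝ᵥ (of fun _ _ => c) *ᵥ y = c * y 0 ^ 2 := by
    simp only [dotProduct, mulVec, of_apply, Fin.sum_univ_one]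
    ring
  rw [fromBlocks_mulVec, Sum.elim_comp_inl, Sum.elim_comp_inr, sumElim_dotProduct_sumElim,
    dotProduct_add, dotProduct_add, hcol, hrow, hcorner]
  ring

theorem quadratic_smul {R : Type*} [CommRing R] (Q : Matrix ι ι R) (ℓ x : ι → R) (c s : R) :
    (s • x) ⬝ᵥ Q *ᵥ (s • x) + 2 * (ℓ ⬝ᵥ (s • x)) + c
      = (x ⬝ᵥ Q *ᵥ x) * (s * s) + 2 * (ℓ ⬝ᵥ x) * s + c := by
  simp only [mulVec_smul, dotProduct_smul, smul_dotProduct, smul_eq_mul]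
  ring

theorem homogenized_quadratic_nonneg {K : Type*} [Field K] [LinearOrder K]
    [IsStrictOrderedRing K] {Q : Matrix ι ι K} {ℓ : ι → K} {c : K}
    (hg : ∀ x : ι → K, 0 ≤ x ⬝ᵥ Q *ᵥ x + 2 * (ℓ ⬝ᵥ x) + c) (x : ι → K) (t : K) :
    0 ≤ x ⬝ᵥ Q *ᵥ x + 2 * (ℓ ⬝ᵥ x) * t + c * t ^ 2 := by
  rcases eq_or_ne t 0 with rfl | ht
  · have hquad : ∀ s, 0 ≤ (x ⬝ᵥ Q *ᵥ x) * (s * s) + 2 * (ℓ ⬝ᵥ x) * s + c := fun s => by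
      rw [← quadratic_smul]
      exact hg (s • x)
    simpa using nonneg_of_forall_quadratic_nonneg hquad
  · have hscaled := hg (t⁻¹ • x)
    rw [quadratic_smul] at hscaled
    calc 0 ≤ t ^ 2 * ((x ⬝ᵥ Q *ᵥ x) * (t⁻¹ * t⁻¹) + 2 * (ℓ ⬝ᵥ x) * t⁻¹ + c) := mul_nonneg (sq_nonneg t) hscaled
      _ = x ⬝ᵥ Q *ᵥ x + 2 * (ℓ ⬝ᵥ x) * t + c * t ^ 2 := by field_simp

end Homogenization

/-- A quadratic function `g x = xᵀQx + 2ℓᵀx + c` (with `Q` symmetric) is nonnegative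
on all of `ℝⁿ` iff the block matrix `[[Q, ℓ], [ℓᵀ, c]]` is positive semidefinite. -/
theorem quadratic_nonneg_iff_posSemidef {n : ℕ} (Q : Matrix (Fin n) (Fin n) ℝ)
    (hQ : Q.IsSymm) (ℓ : Fin n → ℝ) (c : ℝ) :
    (∀ x : Fin n → ℝ, 0 ≤ x ⬝ᵥ Q.mulVec x + 2 * (ℓ ⬝ᵥ x) + c) ↔
      (Matrix.fromBlocks Q (Matrix.replicateCol (Fin 1) ℓ) (Matrix.replicateRow (Fin 1) ℓ)
        (Matrix.of fun _ _ => c)).PosSemidef := by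
  rw [posSemidef_iff_dotProduct_mulVec]
  constructor
  · intro hg
    have hM : (fromBlocks Q (replicateCol (Fin 1) ℓ) (replicateRow (Fin 1) ℓ)
        (of fun _ _ => c)).IsHermitian :=
      IsHermitian.fromBlocks (isHermitian_iff_isSymm.mpr hQ) (conjTranspose_replicateCol ℓ)
        (isHermitian_iff_isSymm.mpr rfl)
    refine ⟨hM, fun z => ?_⟩
    rw [star_trivial, ← Sum.elim_comp_inl_inr z, dotProduct_mulVec_fromBlocks_replicate]
    exact homogenized_quadratic_nonneg hg _ _
  · rintro ⟨-, hpsd⟩ x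
    simpa [dotProduct_mulVec_fromBlocks_replicate] using hpsd (Sum.elim x 1)
end

section
/- Let A, B be symmetric (n+1)×(n+1) real matrices and W = span{A, B} inside the space of symmetric matrices with the trace inner product. Let π_W be the orthogonal projection onto W, and let C = {[x;1][x;1]ᵀ : x ∈ ℝⁿ}. Then π_W(C) is homogenization-convex in W, i.e., the closure of {τ·π_W(X) : τ ≥ 0, X ∈ C} is convex. -/
open Matrix Set

/-!
Since `P` is the orthogonal projection onto `W = span {A, B}` for the trace inner product, `P X`
is the unique element of `W` with the same pairings `(tr (Xᵀ A), tr (Xᵀ B))` as `X`; for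
`X = w wᵀ` these are the values `(wᵀ A w, wᵀ B w)` of two quadratic forms. By Dines' theorem the
joint range of two real quadratic forms is convex, hence so is `{P (w wᵀ) | w ∈ ℝⁿ⁺¹}`. Up to
nonnegative scaling, `[x;1]` ranges over the dense set of vectors with nonzero last coordinate,
so the homogeneous hull of `P(C)` has the same closure as that convex set.

Dines' theorem itself reduces, after a linear change of coordinates in `ℝ²`, to joining the
values `(1, 0)` and `(1, 1)` along the path `t ↦ √(1 - t) • x + √t • y` and applying the
intermediate value theorem to `Q₂ - μ Q₁` along it.
-/

theorem Prod.exists_eq_smul_of_mul_sub_mul_eq_zero {p q : ℝ × ℝ} (hp : p ≠ 0)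
    (h : p.1 * q.2 - q.1 * p.2 = 0) : ∃ c : ℝ, q = c • p := by
  by_cases hp₁ : p.1 = 0
  · have hp₂ : p.2 ≠ 0 := fun hp₂ => hp (Prod.ext hp₁ hp₂)
    refine ⟨q.2 / p.2, Prod.ext ?_ ?_⟩ <;> simp only [Prod.smul_fst, Prod.smul_snd, smul_eq_mul]
    · rw [hp₁, zero_mul, zero_sub, neg_eq_zero, mul_eq_zero] at h
      rw [hp₁, mul_zero, h.resolve_right hp₂]
    · field_simp
  · refine ⟨q.1 / p.1, Prod.ext ?_ ?_⟩ <;> simp only [Prod.smul_fst, Prod.smul_snd, smul_eq_mul]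
    · field_simp
    · field_simp; linarith

namespace QuadraticMap

variable {M : Type*} [AddCommGroup M] [Module ℝ M]

theorem map_smul_add_smul (Q : QuadraticMap ℝ M ℝ) (a b : ℝ) (x y : M) :
    Q (a • x + b • y) = a ^ 2 * Q x + b ^ 2 * Q y + a * b * polar Q x y := by
  rw [QuadraticMap.map_add Q, Q.map_smul, Q.map_smul, polar_smul_left, polar_smul_right]
  simp only [smul_eq_mul]
  ring

theorem exists_eq_one_eq_of_mem_Icc (Q₁ Q₂ : QuadraticMap ℝ M ℝ) {x y : M}
    (hx₁ : Q₁ x = 1) (hy₁ : Q₁ y = 1) (hx₂ : Q₂ x = 0) (hy₂ : Q₂ y = 1) {μ : ℝ}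
    (hμ : μ ∈ Icc (0 : ℝ) 1) : ∃ w, Q₁ w = 1 ∧ Q₂ w = μ := by
  -- `y ↦ -y` flips the sign of `polar Q₁ x y`, so along the path below `Q₁` stays `≥ 1`
  wlog hpolar : 0 ≤ polar Q₁ x y generalizing y
  · exact this (y := -y) (by rwa [Q₁.map_neg]) (by rwa [Q₂.map_neg])
      (by rw [polar_neg_right]; linarith)
  set u : ℝ → M := fun t => √(1 - t) • x + √t • y
  have hQ₁u : ∀ t, Q₁ (u t) = √(1 - t) ^ 2 + √t ^ 2 + √(1 - t) * √t * polar Q₁ x y := by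
    intro t; simp only [u, map_smul_add_smul, hx₁, hy₁]; ring
  have hQ₂u : ∀ t, Q₂ (u t) = √t ^ 2 + √(1 - t) * √t * polar Q₂ x y := by
    intro t; simp only [u, map_smul_add_smul, hx₂, hy₂]; ring
  have hcont : Continuous fun t => Q₂ (u t) - μ * Q₁ (u t) := by
    simp only [hQ₁u, hQ₂u]; fun_prop
  obtain ⟨t, ht, hroot⟩ : ∃ t ∈ Icc (0 : ℝ) 1, Q₂ (u t) - μ * Q₁ (u t) = 0 :=
    intermediate_value_Icc zero_le_one hcont.continuousOn
      ⟨by simp [hQ₁u, hQ₂u, hμ.1], by simp [hQ₁u, hQ₂u, hμ.2]⟩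
  have hQ₁pos : 1 ≤ Q₁ (u t) := by
    rw [hQ₁u, Real.sq_sqrt (by linarith [ht.2]), Real.sq_sqrt ht.1]
    have := mul_nonneg (mul_nonneg (Real.sqrt_nonneg (1 - t)) (Real.sqrt_nonneg t)) hpolar
    linarith
  have hscale : ∀ Q : QuadraticMap ℝ M ℝ, Q ((√(Q₁ (u t)))⁻¹ • u t) = Q (u t) / Q₁ (u t) := by
    intro Q
    rw [Q.map_smul, smul_eq_mul, ← mul_inv, Real.mul_self_sqrt (by linarith), inv_mul_eq_div]
  refine ⟨(√(Q₁ (u t)))⁻¹ • u t, ?_, ?_⟩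
  · rw [hscale, div_self (by linarith)]
  · rw [hscale, div_eq_iff (by linarith)]
    linarith

theorem smul_mem_range_prod (Q₁ Q₂ : QuadraticMap ℝ M ℝ) {c : ℝ} (hc : 0 ≤ c) (v : M) :
    c • (Q₁ v, Q₂ v) ∈ range fun w => (Q₁ w, Q₂ w) :=
  ⟨√c • v, by simp [Q₁.map_smul, Q₂.map_smul, Real.mul_self_sqrt hc]⟩

/-- Dines' theorem. -/
theorem convex_range_prod (Q₁ Q₂ : QuadraticMap ℝ M ℝ) :
    Convex ℝ (range fun v => (Q₁ v, Q₂ v)) := by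
  rintro _ ⟨x, rfl⟩ _ ⟨y, rfl⟩ a b ha hb hab
  obtain rfl : a = 1 - b := by linarith
  show (1 - b) • (Q₁ x, Q₂ x) + b • (Q₁ y, Q₂ y) ∈ _
  set Δ := Q₁ x * Q₂ y - Q₁ y * Q₂ x with hΔ
  by_cases hΔ0 : Δ = 0
  · by_cases hx : (Q₁ x, Q₂ x) = 0
    · rw [hx, smul_zero, zero_add]
      exact smul_mem_range_prod Q₁ Q₂ hb y
    obtain ⟨c, hc⟩ := Prod.exists_eq_smul_of_mul_sub_mul_eq_zero (q := (Q₁ y, Q₂ y)) hx hΔ0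
    rw [hc, smul_smul, ← add_smul]
    rcases le_or_gt 0 (1 - b + b * c) with hpos | hneg
    · exact smul_mem_range_prod Q₁ Q₂ hpos x
    · have hc0 : c < 0 := by nlinarith
      rw [← div_mul_cancel₀ (1 - b + b * c) hc0.ne, ← smul_smul, ← hc]
      exact smul_mem_range_prod Q₁ Q₂ (div_nonneg_of_nonpos hneg.le hc0.le) y
  · -- change coordinates in `ℝ²` so that the two points become `(1, 0)` and `(1, 1)`
    set Q₁' := (Δ⁻¹ * (Q₂ y - Q₂ x)) • Q₁ + (Δ⁻¹ * (Q₁ x - Q₁ y)) • Q₂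
    set Q₂' := (-(Δ⁻¹ * Q₂ x)) • Q₁ + (Δ⁻¹ * Q₁ x) • Q₂
    have hval : ∀ (c d : ℝ) v, (c • Q₁ + d • Q₂) v = c * Q₁ v + d * Q₂ v := fun _ _ _ => rfl
    obtain ⟨w, hw₁, hw₂⟩ := exists_eq_one_eq_of_mem_Icc Q₁' Q₂' (x := x) (y := y)
      (by simp only [Q₁', hval]; field_simp; rw [hΔ]; ring)
      (by simp only [Q₁', hval]; field_simp; rw [hΔ]; ring)
      (by simp only [Q₂', hval]; ring)
      (by simp only [Q₂', hval]; field_simp; rw [hΔ]; ring)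
      ⟨hb, by linarith⟩
    simp only [Q₁', Q₂', hval] at hw₁ hw₂
    field_simp at hw₁ hw₂
    refine ⟨w, Prod.ext (mul_left_cancel₀ hΔ0 ?_) (mul_left_cancel₀ hΔ0 ?_)⟩
    · simp only [Prod.fst_add, Prod.smul_fst, smul_eq_mul]
      linear_combination Q₁ x * hw₁ - (Q₁ x - Q₁ y) * hw₂
    · simp only [Prod.snd_add, Prod.smul_snd, smul_eq_mul]
      linear_combination Q₂ x * hw₁ + (Q₂ y - Q₂ x) * hw₂

end QuadraticMap

theorem Convex.of_image_linearMap_of_injOn {𝕜 E F : Type*} [Semiring 𝕜] [PartialOrder 𝕜]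
    [AddCommMonoid E] [Module 𝕜 E] [AddCommMonoid F] [Module 𝕜 F] {s : Set E}
    {W : Submodule 𝕜 E} (f : E →ₗ[𝕜] F) (hsW : s ⊆ W) (hf : InjOn f W)
    (hs : Convex 𝕜 (f '' s)) : Convex 𝕜 s := by
  have hs_eq : s = (W : Set E) ∩ f ⁻¹' (f '' s) := by
    refine subset_antisymm (fun z hz => ⟨hsW hz, mem_image_of_mem f hz⟩) ?_
    rintro z ⟨hzW, z', hz', hfz⟩
    exact hf (hsW hz') hzW hfz ▸ hz'
  rw [hs_eq]
  exact W.convex.inter (hs.linear_preimage f)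

theorem closure_setOf_smul_snoc_one_eq_closure_range {E : Type*} [TopologicalSpace E]
    [AddCommMonoid E] [Module ℝ E] {n : ℕ} {q : (Fin (n + 1) → ℝ) → E} (hq : Continuous q)
    (hsmul : ∀ (c : ℝ) w, q (c • w) = c ^ 2 • q w) :
    closure {Z | ∃ τ : ℝ, 0 ≤ τ ∧ ∃ x : Fin n → ℝ, Z = τ • q (Fin.snoc x 1)} =
      closure (range q) := by
  refine subset_antisymm (closure_mono ?_) (closure_minimal ?_ isClosed_closure)
  · rintro _ ⟨τ, hτ, x, rfl⟩
    exact ⟨√τ • Fin.snoc x 1, by rw [hsmul, Real.sq_sqrt hτ]⟩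
  · have hdense : Dense {w : Fin (n + 1) → ℝ | w (Fin.last n) ≠ 0} :=
      (dense_compl_singleton 0).preimage (isOpenMap_eval (Fin.last n))
    refine (hq.range_subset_closure_image_dense hdense).trans (closure_mono ?_)
    rintro _ ⟨w, hw, rfl⟩
    set t := w (Fin.last n)
    have hw_eq : w = t • Fin.snoc (t⁻¹ • Fin.init w) 1 := by
      ext i
      induction i using Fin.lastCases with
      | last => simp [t]
      | cast i => simp [Fin.init, t, mul_inv_cancel_left₀ hw]
    exact ⟨t ^ 2, sq_nonneg t, t⁻¹ • Fin.init w, by rw [← hsmul, ← hw_eq]⟩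

namespace Matrix

variable {m : Type*} [Fintype m]

def traceTransposeMul (Y : Matrix m m ℝ) : Matrix m m ℝ →ₗ[ℝ] ℝ where
  toFun Z := trace (Zᵀ * Y)
  map_add' Z Z' := by rw [transpose_add, add_mul, trace_add]
  map_smul' c Z := by rw [transpose_smul, smul_mul, trace_smul, RingHom.id_apply]

theorem traceTransposeMul_apply (Y Z : Matrix m m ℝ) : traceTransposeMul Y Z = trace (Zᵀ * Y) :=
  rfl

theorem traceTransposeMul_vecMulVec_self [DecidableEq m] (Y : Matrix m m ℝ) (w : m → ℝ) :
    traceTransposeMul Y (vecMulVec w w) = Y.toQuadraticForm' w := by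
  rw [traceTransposeMul_apply, transpose_vecMulVec, vecMulVec_mul, trace_vecMulVec,
    Matrix.toQuadraticForm', LinearMap.BilinMap.toQuadraticMap_apply, toLinearMap₂'_apply',
    dotProduct_mulVec, dotProduct_comm]

theorem eq_of_mem_span_of_traceTransposeMul_eq {s : Set (Matrix m m ℝ)} {Z Z' : Matrix m m ℝ}
    (hZ : Z ∈ Submodule.span ℝ s) (hZ' : Z' ∈ Submodule.span ℝ s)
    (h : ∀ Y ∈ s, traceTransposeMul Y Z = traceTransposeMul Y Z') : Z = Z' := by
  have horth : ∀ Y ∈ Submodule.span ℝ s, trace ((Z - Z')ᵀ * Y) = 0 := by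
    intro Y hY
    induction hY using Submodule.span_induction with
    | mem Y hY => rw [← traceTransposeMul_apply, map_sub, h Y hY, sub_self]
    | zero => rw [mul_zero, trace_zero]
    | add Y₁ Y₂ _ _ h₁ h₂ => rw [mul_add, trace_add, h₁, h₂, add_zero]
    | smul c Y _ h => rw [Matrix.mul_smul, trace_smul, h, smul_zero]
  rw [← sub_eq_zero, ← trace_conjTranspose_mul_self_eq_zero_iff,
    conjTranspose_eq_transpose_of_trivial]
  exact horth _ (sub_mem hZ hZ')

theorem traceTransposeMul_apply_projection {s : Set (Matrix m m ℝ)}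
    {P : Matrix m m ℝ → Matrix m m ℝ}
    (hPorth : ∀ X, ∀ Y ∈ Submodule.span ℝ s, trace ((X - P X)ᵀ * Y) = 0)
    {Y : Matrix m m ℝ} (hY : Y ∈ Submodule.span ℝ s) (X : Matrix m m ℝ) :
    traceTransposeMul Y (P X) = traceTransposeMul Y X := by
  have h := hPorth X Y hY
  rwa [← traceTransposeMul_apply, map_sub, sub_eq_zero, eq_comm] at h

theorem isLinearMap_of_projection {s : Set (Matrix m m ℝ)} {P : Matrix m m ℝ → Matrix m m ℝ}
    (hPmem : ∀ X, P X ∈ Submodule.span ℝ s)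
    (hPorth : ∀ X, ∀ Y ∈ Submodule.span ℝ s, trace ((X - P X)ᵀ * Y) = 0) :
    IsLinearMap ℝ P := by
  have hP : ∀ Y ∈ s, ∀ X, traceTransposeMul Y (P X) = traceTransposeMul Y X :=
    fun Y hY => traceTransposeMul_apply_projection hPorth (Submodule.subset_span hY)
  refine ⟨fun X X' => ?_, fun c X => ?_⟩
  · refine eq_of_mem_span_of_traceTransposeMul_eq (hPmem _) (add_mem (hPmem X) (hPmem X'))
      fun Y hY => ?_
    simp only [map_add, hP Y hY]
  · refine eq_of_mem_span_of_traceTransposeMul_eq (hPmem _) (Submodule.smul_mem _ c (hPmem X))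
      fun Y hY => ?_
    simp only [map_smul, hP Y hY]

end Matrix

theorem projected_rank_one_set_homogenizationConvex_general {n : ℕ}
    (A B : Matrix (Fin (n + 1)) (Fin (n + 1)) ℝ)
    (P : Matrix (Fin (n + 1)) (Fin (n + 1)) ℝ → Matrix (Fin (n + 1)) (Fin (n + 1)) ℝ)
    (hPmem : ∀ X, P X ∈ Submodule.span ℝ ({A, B} : Set (Matrix (Fin (n + 1)) (Fin (n + 1)) ℝ)))
    (hPorth : ∀ X, ∀ Y ∈ Submodule.span ℝ ({A, B} : Set (Matrix (Fin (n + 1)) (Fin (n + 1)) ℝ)),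
      Matrix.trace ((X - P X)ᵀ * Y) = 0) :
    Convex ℝ (closure {Z : Matrix (Fin (n + 1)) (Fin (n + 1)) ℝ | ∃ τ : ℝ, 0 ≤ τ ∧
      ∃ x : Fin n → ℝ,
        Z = τ • P (Matrix.vecMulVec (Fin.snoc x 1) (Fin.snoc x 1))}) := by
  have hP : IsLinearMap ℝ P := isLinearMap_of_projection hPmem hPorth
  set q : (Fin (n + 1) → ℝ) → Matrix (Fin (n + 1)) (Fin (n + 1)) ℝ := fun w => P (vecMulVec w w)
  have hq_cont : Continuous q :=
    (hP.mk' P).continuous_of_finiteDimensional.comp (by fun_prop)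
  have hq_smul : ∀ (c : ℝ) w, q (c • w) = c ^ 2 • q w := fun c w => by
    simp only [q, smul_vecMulVec, vecMulVec_smul, smul_smul, hP.map_smul, sq]
  set T := (traceTransposeMul A).prod (traceTransposeMul B)
  have hT_inj : InjOn T (Submodule.span ℝ {A, B}) := fun Z hZ Z' hZ' h => by
    refine eq_of_mem_span_of_traceTransposeMul_eq hZ hZ' ?_
    simpa [T] using h
  have hAW : A ∈ Submodule.span ℝ {A, B} := Submodule.subset_span (mem_insert A {B})
  have hBW : B ∈ Submodule.span ℝ {A, B} := Submodule.subset_span (mem_insert_of_mem A rfl)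
  have hT_q : T '' range q = range fun w => (A.toQuadraticForm' w, B.toQuadraticForm' w) := by
    rw [← range_comp]
    congr 1
    ext w : 1
    change (traceTransposeMul A (P (vecMulVec w w)), traceTransposeMul B (P (vecMulVec w w))) = _
    rw [traceTransposeMul_apply_projection hPorth hAW,
      traceTransposeMul_apply_projection hPorth hBW, traceTransposeMul_vecMulVec_self,
      traceTransposeMul_vecMulVec_self]
  have hq_conv : Convex ℝ (range q) :=
    Convex.of_image_linearMap_of_injOn T (range_subset_iff.2 fun w => hPmem _) hT_inj
      (hT_q ▸ QuadraticMap.convex_range_prod _ _)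
  rw [closure_setOf_smul_snoc_one_eq_closure_range hq_cont hq_smul]
  exact hq_conv.closure

/-- Let `A, B` be symmetric `(n+1)×(n+1)` matrices, `W = span {A, B}` with the trace
inner product, and `P` the orthogonal projection onto `W` (characterized by `P X ∈ W`
and `X - P X ⟂ W` in the trace inner product). Then the image under `P` of
`C = {[x;1][x;1]ᵀ : x ∈ ℝⁿ}` is homogenization-convex: the closure of its
homogeneous hull is convex. -/
theorem projected_rank_one_set_homogenizationConvex {n : ℕ}
    (A B : Matrix (Fin (n + 1)) (Fin (n + 1)) ℝ) (hA : A.IsSymm) (hB : B.IsSymm)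
    (P : Matrix (Fin (n + 1)) (Fin (n + 1)) ℝ → Matrix (Fin (n + 1)) (Fin (n + 1)) ℝ)
    (hPmem : ∀ X, P X ∈ Submodule.span ℝ ({A, B} : Set (Matrix (Fin (n + 1)) (Fin (n + 1)) ℝ)))
    (hPorth : ∀ X, ∀ Y ∈ Submodule.span ℝ ({A, B} : Set (Matrix (Fin (n + 1)) (Fin (n + 1)) ℝ)),
      Matrix.trace ((X - P X)ᵀ * Y) = 0) :
    Convex ℝ (closure {Z : Matrix (Fin (n + 1)) (Fin (n + 1)) ℝ | ∃ τ : ℝ, 0 ≤ τ ∧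
      ∃ x : Fin n → ℝ,
        Z = τ • P (Matrix.vecMulVec (Fin.snoc x 1) (Fin.snoc x 1))}) :=
  projected_rank_one_set_homogenizationConvex_general A B P hPmem hPorth
end

section
/- Let C ⊆ ℝ² satisfy: for all x₁, x₂ ∈ C and every x in the segment [x₁,x₂] with x ≠ 0, the unit vector x/‖x‖ lies in the closure of {y/‖y‖ : y ∈ C \ {0}}. Then C is homogenization-convex: the closure of {τx : τ ≥ 0, x ∈ C} is convex. -/
/-!
A point `s • (τ₁ • x₁) + t • (τ₂ • x₂)` of a segment between two points of `hom(C)` is a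
nonnegative multiple `γ • x` of a point `x ∈ [x₁, x₂]`. For `x ≠ 0` the hypothesis puts
`x / ‖x‖` into the closure of the spherical image of `C`, which lies in the closure of the cone
`hom(C)`, and that closure is stable under nonnegative scaling; so `γ • x ∈ closure hom(C)`.
A set all of whose segments lie in its closure has convex closure.
-/

open Set

theorem convex_closure_of_segment_subset_closure {E : Type*} [AddCommGroup E] [Module ℝ E]
    [TopologicalSpace E] [ContinuousAdd E] [ContinuousSMul ℝ E] {s : Set E}
    (h : ∀ a ∈ s, ∀ b ∈ s, segment ℝ a b ⊆ closure s) : Convex ℝ (closure s) := by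
  intro a ha b hb u v hu hv huv
  simpa only [closure_closure] using map_mem_closure₂ (f := fun x y : E => u • x + v • y)
    (by fun_prop) ha hb fun x hx y hy => h x hx y hy ⟨u, v, hu, hv, huv, rfl⟩

theorem exists_mem_segment_smul_eq_add_smul {E : Type*} [AddCommGroup E] [Module ℝ E]
    (x₁ x₂ : E) {α β : ℝ} (hα : 0 ≤ α) (hβ : 0 ≤ β) :
    ∃ γ : ℝ, 0 ≤ γ ∧ ∃ x ∈ segment ℝ x₁ x₂, α • x₁ + β • x₂ = γ • x := by
  rcases (add_nonneg hα hβ).eq_or_lt with hγ | hγ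
  · obtain ⟨rfl, rfl⟩ := (add_eq_zero_iff_of_nonneg hα hβ).mp hγ.symm
    exact ⟨0, le_rfl, x₁, left_mem_segment ℝ x₁ x₂, by simp⟩
  · refine ⟨α + β, hγ.le, _, mem_segment_iff_div.mpr ⟨α, β, hα, hβ, hγ, rfl⟩, ?_⟩
    rw [smul_add, smul_smul, smul_smul, mul_div_cancel₀ _ hγ.ne', mul_div_cancel₀ _ hγ.ne']

def sphericalImage (C : Set (ℝ × ℝ)) : Set (ℝ × ℝ) :=
  {z | ∃ y ∈ C \ {(0 : ℝ × ℝ)}, z = ‖y‖⁻¹ • y}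

variable {C : Set (ℝ × ℝ)}

theorem smul_mem_homHull {c : ℝ} (hc : 0 ≤ c) {y : ℝ × ℝ} (hy : y ∈ homHull C) :
    c • y ∈ homHull C := by
  obtain ⟨τ, hτ, x, hx, rfl⟩ := hy
  exact ⟨c * τ, mul_nonneg hc hτ, x, hx, smul_smul c τ x⟩

theorem smul_mem_closure_homHull {c : ℝ} (hc : 0 ≤ c) {y : ℝ × ℝ}
    (hy : y ∈ closure (homHull C)) : c • y ∈ closure (homHull C) :=
  map_mem_closure (continuous_const_smul c) hy fun _ => smul_mem_homHull hc

theorem sphericalImage_subset_homHull : sphericalImage C ⊆ homHull C := by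
  rintro z ⟨y, ⟨hy, -⟩, rfl⟩
  exact ⟨‖y‖⁻¹, inv_nonneg.mpr (norm_nonneg y), y, hy, rfl⟩

theorem smul_mem_closure_homHull_of_mem_segment
    (h : ∀ x₁ ∈ C, ∀ x₂ ∈ C, ∀ x ∈ segment ℝ x₁ x₂, x ≠ 0 →
      ‖x‖⁻¹ • x ∈ closure (sphericalImage C))
    {x₁ x₂ x : ℝ × ℝ} (hx₁ : x₁ ∈ C) (hx₂ : x₂ ∈ C) (hx : x ∈ segment ℝ x₁ x₂)
    {γ : ℝ} (hγ : 0 ≤ γ) : γ • x ∈ closure (homHull C) := by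
  rcases eq_or_ne x 0 with rfl | hx0
  · exact subset_closure ⟨0, le_rfl, x₁, hx₁, by simp⟩
  have hunit : ‖x‖⁻¹ • x ∈ closure (homHull C) :=
    closure_mono sphericalImage_subset_homHull (h x₁ hx₁ x₂ hx₂ x hx hx0)
  have hx_eq : (γ * ‖x‖) • (‖x‖⁻¹ • x) = γ • x := by
    rw [smul_smul, mul_assoc, mul_inv_cancel₀ (norm_ne_zero_iff.mpr hx0), mul_one]
  exact hx_eq ▸ smul_mem_closure_homHull (mul_nonneg hγ (norm_nonneg x)) hunit

theorem segment_subset_closure_homHull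
    (h : ∀ x₁ ∈ C, ∀ x₂ ∈ C, ∀ x ∈ segment ℝ x₁ x₂, x ≠ 0 →
      ‖x‖⁻¹ • x ∈ closure (sphericalImage C))
    {a b : ℝ × ℝ} (ha : a ∈ homHull C) (hb : b ∈ homHull C) :
    segment ℝ a b ⊆ closure (homHull C) := by
  obtain ⟨τ₁, hτ₁, x₁, hx₁, rfl⟩ := ha
  obtain ⟨τ₂, hτ₂, x₂, hx₂, rfl⟩ := hb
  rintro _ ⟨s, t, hs, ht, -, rfl⟩
  obtain ⟨γ, hγ, x, hx, hcomb⟩ :=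
    exists_mem_segment_smul_eq_add_smul x₁ x₂ (mul_nonneg hs hτ₁) (mul_nonneg ht hτ₂)
  rw [smul_smul, smul_smul, hcomb]
  exact smul_mem_closure_homHull_of_mem_segment h hx₁ hx₂ hx hγ

/-- If for all `x₁, x₂ ∈ C` every nonzero point of the segment `[x₁, x₂]` projects
spherically into the closure of the spherical projection of `C`, then `C` is
homogenization-convex. -/
theorem homogenizationConvex_of_segment_condition (C : Set (ℝ × ℝ))
    (h : ∀ x₁ ∈ C, ∀ x₂ ∈ C, ∀ x ∈ segment ℝ x₁ x₂, x ≠ 0 →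
      ‖x‖⁻¹ • x ∈ closure {z | ∃ y ∈ C \ {(0 : ℝ × ℝ)}, z = ‖y‖⁻¹ • y}) :
    Convex ℝ (closure (homHull C)) :=
  convex_closure_of_segment_subset_closure fun _ ha _ hb =>
    segment_subset_closure_homHull h ha hb
end
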